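/- Let $H$ be a group that is the amalgamated free product of two subgroups $A$ and $B$ over their common subgroup $C = A \cap B$, and let $k$ be a commutative ring. Then there is a short exact sequence of $k[H]$-modules $0 \to k[H/C] \to k[H/A] \oplus k[H/B] \to k \to 0$, where the first map sends the coset $hC$ to $(hA, -hB)$ and the second map is $(x,y) \mapsto \epsilon(x) + \epsilon(y)$ for the augmentation maps $\epsilon$, so that $(hA, 0) \mapsto 1$ and $(0, hB) \mapsto 1$. -/

import Mathlib

open scoped Pointwise

/- STATEMENT 11 setup: `H` is a group with subgroups `A`, `B` and `C = A ⊓ B`.  The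
hypothesis that `H` is the amalgamated free product `A *_C B` is expressed by the pushout
universal property (together with `H` being generated by `A ∪ B`).  For a commutative
ring `k`, `k[H/A] = Ind_A^H(k)` is the free `k`-module `(H ⧸ A) →₀ k` on the coset space,
with `H` acting by left translation (`Finsupp.mapDomain` of the coset action); the maps of
the Mayer–Vietoris sequence are `hC ↦ (hA, -hB)` and the sum of the augmentations. -/

open Monoid.PushoutI Monoid.PushoutI.NormalWord

def Fam2 (X Y : Type) : Bool → Type
  | false => X
  | true => Y

instance Fam2.group {X Y : Type} [Group X] [Group Y] : (b : Bool) → Group (Fam2 X Y b)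
  | false => ‹Group X›
  | true => ‹Group Y›

def fam2Hom {X Y Z : Type} [Group X] [Group Y] [Group Z] (f : Z →* X) (g : Z →* Y) :
    (b : Bool) → Z →* Fam2 X Y b
  | false => f
  | true => g

theorem exists_length {H : Type} [Group H] (A B : Subgroup H)
    (huniv : ∀ (K : Type) [Group K] (fA : A →* K) (fB : B →* K),
      (∀ (x : H) (hA : x ∈ A) (hB : x ∈ B), fA ⟨x, hA⟩ = fB ⟨x, hB⟩) →
      ∃! F : H →* K, (∀ a : A, F a = fA (a : A)) ∧ (∀ b : B, F b = fB (b : B))) :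
    ∃ (ℓ : H → ℕ) (t : H → Option Bool),
      (∀ h a, a ∈ A → a ∉ A ⊓ B → t h ≠ some false →
        ℓ (h * a) = ℓ h + 1 ∧ t (h * a) = some false) ∧
      (∀ h b, b ∈ B → b ∉ A ⊓ B → t h ≠ some true →
        ℓ (h * b) = ℓ h + 1 ∧ t (h * b) = some true) := by
  classical
  set φ : ∀ b, ↥(A ⊓ B) →* Fam2 ↥A ↥B b :=
    fam2Hom (Subgroup.inclusion inf_le_left) (Subgroup.inclusion inf_le_right) with hφdef
  have hφ : ∀ i, Function.Injective (φ i) := by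
    intro i
    cases i
    · exact Subgroup.inclusion_injective (inf_le_left : A ⊓ B ≤ A)
    · exact Subgroup.inclusion_injective (inf_le_right : A ⊓ B ≤ B)
  obtain ⟨d⟩ := transversal_nonempty φ hφ
  have hcompat : ∀ (x : H) (hA : x ∈ A) (hB : x ∈ B),
      (of (φ := φ) false) ⟨x, hA⟩ = (of (φ := φ) true) ⟨x, hB⟩ := by
    intro x hA hB
    have h1 : (⟨x, hA⟩ : ↥A) = φ false ⟨x, ⟨hA, hB⟩⟩ := rfl
    have h2 : (⟨x, hB⟩ : ↥B) = φ true ⟨x, ⟨hA, hB⟩⟩ := rfl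
    rw [h1, h2, of_apply_eq_base, of_apply_eq_base]
  obtain ⟨Ψ, ⟨hΨA, hΨB⟩, -⟩ :=
    huniv (Monoid.PushoutI φ) (of (φ := φ) false) (of (φ := φ) true) hcompat
  set W : H → NormalWord d := fun h => Ψ h⁻¹ • (empty : NormalWord d) with hW
  refine ⟨fun h => (W h).toList.length, fun h => (W h).fstIdx, ?_, ?_⟩
  · intro h a ha hac ht
    have hx : Ψ (a⁻¹) = of (φ := φ) false ⟨a⁻¹, inv_mem ha⟩ := hΨA ⟨a⁻¹, inv_mem ha⟩
    have hgr : (⟨a⁻¹, inv_mem ha⟩ : ↥A) ∉ (φ false).range := by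
      rintro ⟨c, hc⟩
      apply hac
      have hc' : (c : H) = a⁻¹ := congrArg Subtype.val hc
      simpa [hc'] using inv_mem c.2
    have hWh : W (h * a) = cons (i := false) (show Fam2 ↥A ↥B false from ⟨a⁻¹, inv_mem ha⟩) (W h) ht hgr := by
      rw [cons_eq_smul, hW]
      simp only [mul_inv_rev, map_mul, mul_smul, hx]
    constructor
    · show (W (h * a)).toList.length = (W h).toList.length + 1
      rw [hWh]; simp [cons, Monoid.CoprodI.Word.cons]
    · show (W (h * a)).fstIdx = some false
      rw [hWh]; simp [cons, Monoid.CoprodI.Word.cons, Monoid.CoprodI.Word.fstIdx]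
  · intro h b hb hbc ht
    have hx : Ψ (b⁻¹) = of (φ := φ) true ⟨b⁻¹, inv_mem hb⟩ := hΨB ⟨b⁻¹, inv_mem hb⟩
    have hgr : (⟨b⁻¹, inv_mem hb⟩ : ↥B) ∉ (φ true).range := by
      rintro ⟨c, hc⟩
      apply hbc
      have hc' : (c : H) = b⁻¹ := congrArg Subtype.val hc
      simpa [hc'] using inv_mem c.2
    have hWh : W (h * b) = cons (i := true) (show Fam2 ↥A ↥B true from ⟨b⁻¹, inv_mem hb⟩) (W h) ht hgr := by
      rw [cons_eq_smul, hW]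
      simp only [mul_inv_rev, map_mul, mul_smul, hx]
    constructor
    · show (W (h * b)).toList.length = (W h).toList.length + 1
      rw [hWh]; simp [cons, Monoid.CoprodI.Word.cons]
    · show (W (h * b)).fstIdx = some true
      rw [hWh]; simp [cons, Monoid.CoprodI.Word.cons, Monoid.CoprodI.Word.fstIdx]

theorem stmt11 (H : Type) [Group H] (A B : Subgroup H)
    (hgen : Subgroup.closure ((A : Set H) ∪ (B : Set H)) = ⊤)
    (huniv : ∀ (K : Type) [Group K] (fA : A →* K) (fB : B →* K),
      (∀ (x : H) (hA : x ∈ A) (hB : x ∈ B), fA ⟨x, hA⟩ = fB ⟨x, hB⟩) →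
      ∃! F : H →* K, (∀ a : A, F a = fA (a : A)) ∧ (∀ b : B, F b = fB (b : B)))
    (k : Type) [CommRing k]
    (f : ((H ⧸ (A ⊓ B)) →₀ k) →ₗ[k] ((H ⧸ A) →₀ k) × ((H ⧸ B) →₀ k))
    (hf : ∀ h : H, f (Finsupp.single ((h : H ⧸ (A ⊓ B))) 1)
      = (Finsupp.single ((h : H ⧸ A)) 1, - Finsupp.single ((h : H ⧸ B)) 1))
    (g : (((H ⧸ A) →₀ k) × ((H ⧸ B) →₀ k)) →ₗ[k] k)
    (hg : ∀ x : ((H ⧸ A) →₀ k) × ((H ⧸ B) →₀ k),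
      g x = x.1.sum (fun _ c => c) + x.2.sum (fun _ c => c)) :
    Function.Injective f ∧
    LinearMap.range f = LinearMap.ker g ∧
    Function.Surjective g ∧
    (∀ (h : H) (x : (H ⧸ (A ⊓ B)) →₀ k),
      f (Finsupp.mapDomain (fun q => h • q) x)
        = (Finsupp.mapDomain (fun q => h • q) (f x).1,
           Finsupp.mapDomain (fun q => h • q) (f x).2)) ∧
    (∀ (h : H) (x : ((H ⧸ A) →₀ k) × ((H ⧸ B) →₀ k)),
      g (Finsupp.mapDomain (fun q => h • q) x.1, Finsupp.mapDomain (fun q => h • q) x.2)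
        = g x) := by
  classical
  obtain ⟨ℓ, t, KA, KB⟩ := exists_length A B huniv
  -- `f` on general scaled basis vectors
  have hfc : ∀ (h : H) (c : k), f (Finsupp.single ((h : H ⧸ (A ⊓ B))) c)
      = (Finsupp.single ((h : H ⧸ A)) c, - Finsupp.single ((h : H ⧸ B)) c) := by
    intro h c
    have h1 : Finsupp.single ((h : H ⧸ (A ⊓ B))) c
        = c • Finsupp.single ((h : H ⧸ (A ⊓ B))) (1 : k) := by
      rw [Finsupp.smul_single, smul_eq_mul, mul_one]
    rw [h1, map_smul, hf]
    simp [Prod.smul_mk, Finsupp.smul_single]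
  have hq : ∀ (q : H ⧸ (A ⊓ B)) (c : k), f (Finsupp.single q c)
      = (Finsupp.single (((q.out : H) : H ⧸ A)) c,
         - Finsupp.single (((q.out : H) : H ⧸ B)) c) := by
    intro q c
    conv_lhs => rw [← QuotientGroup.out_eq' q]
    exact hfc q.out c
  -- Injectivity
  have hinj : Function.Injective f := by
    rw [injective_iff_map_eq_zero]
    intro x hx
    by_contra hx0
    have hsupp : x.support.Nonempty := Finsupp.support_nonempty_iff.mpr hx0
    obtain ⟨e, he, hemax⟩ := x.support.exists_max_image (fun q => ℓ q.out) hsupp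
    have hxe : x e ≠ 0 := Finsupp.mem_support_iff.mp he
    -- componentwise evaluation of `f x`
    have hfx1 : ∀ v : H ⧸ A, (f x).1 v
        = ∑ q ∈ x.support, (if (((q.out : H) : H ⧸ A)) = v then x q else 0) := by
      intro v
      conv_lhs => rw [← Finsupp.sum_single x, map_finsuppSum]
      rw [Finsupp.sum]
      rw [Prod.fst_sum, Finsupp.finset_sum_apply]
      refine Finset.sum_congr rfl ?_
      intro q hqs
      rw [hq q (x q)]
      simp [Finsupp.single_apply]
    have hfx2 : ∀ v : H ⧸ B, (f x).2 v
        = - ∑ q ∈ x.support, (if (((q.out : H) : H ⧸ B)) = v then x q else 0) := by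
      intro v
      conv_lhs => rw [← Finsupp.sum_single x, map_finsuppSum]
      rw [Finsupp.sum]
      rw [Prod.snd_sum, Finsupp.finset_sum_apply, ← Finset.sum_neg_distrib]
      refine Finset.sum_congr rfl ?_
      intro q hqs
      rw [hq q (x q)]
      simp [Finsupp.single_apply]
    -- the common argument : other support elements project elsewhere
    by_cases hcase : t e.out = some true
    · -- look at the A-component at v = ⟦e.out⟧
      have hv : (f x).1 (((e.out : H) : H ⧸ A)) = x e := by
        rw [hfx1]
        rw [Finset.sum_eq_single e]
        · rw [if_pos rfl]
        · intro q hqs hqe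
          rw [if_neg]
          intro hveq
          have hmem : (e.out)⁻¹ * q.out ∈ A := by
            have := (QuotientGroup.eq (s := A)).mp hveq.symm
            exact this
          by_cases hic : (e.out)⁻¹ * q.out ∈ A ⊓ B
          · apply hqe
            have : ((q.out : H) : H ⧸ (A ⊓ B)) = ((e.out : H) : H ⧸ (A ⊓ B)) :=
              ((QuotientGroup.eq (s := A ⊓ B)).mpr hic).symm
            rw [QuotientGroup.out_eq', QuotientGroup.out_eq'] at this
            exact this
          · have hKA := KA e.out ((e.out)⁻¹ * q.out) hmem hic
              (by rw [hcase]; simp)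
            rw [mul_inv_cancel_left] at hKA
            have := hemax q hqs
            omega
        · intro habs; exact absurd he habs
      rw [hx] at hv
      exact hxe (by simpa using hv.symm)
    · -- look at the B-component at v = ⟦e.out⟧
      have hv : (f x).2 (((e.out : H) : H ⧸ B)) = - x e := by
        rw [hfx2, neg_inj]
        rw [Finset.sum_eq_single e]
        · rw [if_pos rfl]
        · intro q hqs hqe
          rw [if_neg]
          intro hveq
          have hmem : (e.out)⁻¹ * q.out ∈ B := by
            have := (QuotientGroup.eq (s := B)).mp hveq.symm
            exact this
          by_cases hic : (e.out)⁻¹ * q.out ∈ A ⊓ B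
          · apply hqe
            have : ((q.out : H) : H ⧸ (A ⊓ B)) = ((e.out : H) : H ⧸ (A ⊓ B)) :=
              ((QuotientGroup.eq (s := A ⊓ B)).mpr hic).symm
            rw [QuotientGroup.out_eq', QuotientGroup.out_eq'] at this
            exact this
          · have hKB := KB e.out ((e.out)⁻¹ * q.out) hmem hic hcase
            rw [mul_inv_cancel_left] at hKB
            have := hemax q hqs
            omega
        · intro habs; exact absurd he habs
      rw [hx] at hv
      apply hxe
      have h0 : (0 : k) = - x e := by simpa using hv
      simpa using h0.symm
  -- surjectivity of g
  have hsurj : Function.Surjective g := by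
    intro c
    refine ⟨(Finsupp.single (((1 : H) : H ⧸ A)) c, 0), ?_⟩
    rw [hg]
    simp [Finsupp.sum_single_index]
  -- range f = ker g
  have hrk : LinearMap.range f = LinearMap.ker g := by
    apply le_antisymm
    · rintro - ⟨y, rfl⟩
      rw [LinearMap.mem_ker]
      conv_lhs => rw [← Finsupp.sum_single y, map_finsuppSum, map_finsuppSum]
      rw [Finsupp.sum]
      refine Finset.sum_eq_zero ?_
      intro q hqs
      rw [hq, hg]
      simp [← Finsupp.single_neg, Finsupp.sum_single_index]
    · intro z hz
      rw [LinearMap.mem_ker] at hz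
      set R := LinearMap.range f with hR
      set π := R.mkQ with hπ
      have hπf : ∀ w, π (f w) = 0 := by
        intro w
        rw [hπ, Submodule.mkQ_apply, Submodule.Quotient.mk_eq_zero]
        exact ⟨w, rfl⟩
      have E1 : ∀ h : H, π (Finsupp.single ((h : H ⧸ A)) (1:k), 0)
          = π (0, Finsupp.single ((h : H ⧸ B)) (1:k)) := by
        intro h
        have h2 := hπf (Finsupp.single ((h : H ⧸ (A ⊓ B))) 1)
        rw [hf] at h2
        have hsplit : ((Finsupp.single ((h : H ⧸ A)) (1:k), - Finsupp.single ((h : H ⧸ B)) (1:k))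
            : ((H ⧸ A) →₀ k) × ((H ⧸ B) →₀ k))
            = (Finsupp.single ((h : H ⧸ A)) (1:k), 0) - (0, Finsupp.single ((h : H ⧸ B)) (1:k)) := by
          apply Prod.ext <;> simp
        rw [hsplit, map_sub, sub_eq_zero] at h2
        exact h2
      have key : ∀ h g0 : H, π (Finsupp.single (((g0 * h : H) : H ⧸ A)) (1:k), 0)
          = π (Finsupp.single ((g0 : H ⧸ A)) (1:k), 0) := by
        intro h
        have hmem : h ∈ Subgroup.closure ((A : Set H) ∪ (B : Set H)) := by
          rw [hgen]; exact Subgroup.mem_top h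
        induction hmem using Subgroup.closure_induction with
        | mem y hy =>
          intro g0
          rcases hy with hy | hy
          · rw [QuotientGroup.mk_mul_of_mem g0 hy]
          · rw [E1, QuotientGroup.mk_mul_of_mem g0 hy, ← E1]
        | one => intro g0; rw [mul_one]
        | mul y z hy hz ihy ihz =>
          intro g0
          rw [← mul_assoc]
          rw [ihz (g0 * y), ihy g0]
        | inv y hy ihy =>
          intro g0
          have := ihy (g0 * y⁻¹)
          rw [mul_assoc, inv_mul_cancel, mul_one] at this
          exact this.symm
      set e₀ := π (Finsupp.single (((1:H) : H ⧸ A)) (1:k), 0) with he₀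
      have hA1 : ∀ (v : H ⧸ A) (c : k), π (Finsupp.single v c, 0) = c • e₀ := by
        intro v c
        have h1 : (Finsupp.single v c, (0 : (H ⧸ B) →₀ k))
            = c • (Finsupp.single v (1:k), (0 : (H ⧸ B) →₀ k)) := by
          apply Prod.ext <;> simp
        rw [h1, map_smul]
        congr 1
        have h2 := key v.out 1
        rw [one_mul, QuotientGroup.out_eq'] at h2
        exact h2
      have hB1 : ∀ (v : H ⧸ B) (c : k), π (0, Finsupp.single v c) = c • e₀ := by
        intro v c
        have h1 : ((0 : (H ⧸ A) →₀ k), Finsupp.single v c)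
            = c • ((0 : (H ⧸ A) →₀ k), Finsupp.single v (1:k)) := by
          apply Prod.ext <;> simp
        rw [h1, map_smul]
        congr 1
        have h2 := E1 v.out
        rw [QuotientGroup.out_eq'] at h2
        rw [← h2]
        have h3 := key v.out 1
        rw [one_mul] at h3
        rw [he₀]
        exact h3
      -- now compute π z
      have hz1 : π z = (g z) • e₀ := by
        have hzsplit : z = (z.1, 0) + (0, z.2) := by
          apply Prod.ext <;> simp
        rw [hzsplit, map_add]
        have hP1 : π (z.1, 0) = (z.1.sum fun _ c => c) • e₀ := by
          have h5 : π (z.1, 0)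
              = (π.comp (LinearMap.inl k ((H ⧸ A) →₀ k) ((H ⧸ B) →₀ k))) z.1 := rfl
          rw [h5]
          conv_lhs => rw [← Finsupp.sum_single z.1, map_finsuppSum]
          rw [Finsupp.sum, Finsupp.sum, Finset.sum_smul]
          refine Finset.sum_congr rfl fun v _ => ?_
          rw [LinearMap.comp_apply, LinearMap.inl_apply]
          exact hA1 v (z.1 v)
        have hP2 : π (0, z.2) = (z.2.sum fun _ c => c) • e₀ := by
          have h5 : π (0, z.2)
              = (π.comp (LinearMap.inr k ((H ⧸ A) →₀ k) ((H ⧸ B) →₀ k))) z.2 := rfl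
          rw [h5]
          conv_lhs => rw [← Finsupp.sum_single z.2, map_finsuppSum]
          rw [Finsupp.sum, Finsupp.sum, Finset.sum_smul]
          refine Finset.sum_congr rfl fun v _ => ?_
          rw [LinearMap.comp_apply, LinearMap.inr_apply]
          exact hB1 v (z.2 v)
        rw [hP1, hP2, ← add_smul, ← hzsplit, hg z]
      rw [hz, zero_smul] at hz1
      rw [hπ, Submodule.mkQ_apply, Submodule.Quotient.mk_eq_zero] at hz1
      exact hz1
  -- equivariance of f
  have hequiv : ∀ (h : H) (x : (H ⧸ (A ⊓ B)) →₀ k),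
      f (Finsupp.mapDomain (fun q => h • q) x)
        = (Finsupp.mapDomain (fun q => h • q) (f x).1,
           Finsupp.mapDomain (fun q => h • q) (f x).2) := by
    intro h x
    induction x using Finsupp.induction_linear with
    | zero => simp [Finsupp.mapDomain_zero]; rfl
    | add u v ihu ihv =>
      rw [Finsupp.mapDomain_add, map_add, map_add]
      rw [ihu, ihv]
      apply Prod.ext
      · simp [Finsupp.mapDomain_add]
      · simp [Finsupp.mapDomain_add]
    | single q c =>
      obtain ⟨w, rfl⟩ := QuotientGroup.mk_surjective q
      have h1 : Finsupp.mapDomain (fun q : H ⧸ (A ⊓ B) => h • q)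
            (Finsupp.single ((w : H ⧸ (A ⊓ B))) c)
          = Finsupp.single (((h * w : H) : H ⧸ (A ⊓ B))) c := by
        rw [Finsupp.mapDomain_single, MulAction.Quotient.smul_mk, smul_eq_mul]
      rw [h1, hfc, hfc]
      apply Prod.ext
      · show Finsupp.single (((h * w : H) : H ⧸ A)) c
          = Finsupp.mapDomain (fun q : H ⧸ A => h • q) (Finsupp.single ((w : H ⧸ A)) c)
        rw [Finsupp.mapDomain_single, MulAction.Quotient.smul_mk, smul_eq_mul]
      · show - Finsupp.single (((h * w : H) : H ⧸ B)) c
          = Finsupp.mapDomain (fun q : H ⧸ B => h • q) (- Finsupp.single ((w : H ⧸ B)) c)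
        rw [← Finsupp.single_neg, ← Finsupp.single_neg, Finsupp.mapDomain_single,
          MulAction.Quotient.smul_mk, smul_eq_mul]
  -- invariance of g
  have hinv : ∀ (h : H) (x : ((H ⧸ A) →₀ k) × ((H ⧸ B) →₀ k)),
      g (Finsupp.mapDomain (fun q => h • q) x.1, Finsupp.mapDomain (fun q => h • q) x.2)
        = g x := by
    intro h x
    rw [hg, hg]
    congr 1
    · exact Finsupp.sum_mapDomain_index (fun _ => rfl) (fun _ _ _ => rfl)
    · exact Finsupp.sum_mapDomain_index (fun _ => rfl) (fun _ _ _ => rfl)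
  exact ⟨hinj, hrk, hsurj, hequiv, hinv⟩
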